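/- Let f : [a,b] → ℝ be differentiable with f' integrable, a < b, q > 1, p = q/(q-1), and |f'|^q convex on [a,b]. Then |(1/6)[f(a) + 4f((a+b)/2) + f(b)] - (1/(b-a)) ∫_a^b f(x) dx| ≤ ((b-a)/12)((1 + 2^{p+1})/(3(p+1)))^{1/p} [ ((|f'((a+b)/2)|^q + |f'(a)|^q)/2)^{1/q} + ((|f'((a+b)/2)|^q + |f'(b)|^q)/2)^{1/q} ]. -/

import Mathlib

/-!
Integrating by parts on each half of `[a, b]` against the kernels `x - (5a + b)/6` and
`x - (a + 5b)/6` writes the Simpson error as `1/(b - a)` times two integrals of a kernel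
against `f'`. On each half, Hölder's inequality bounds such an integral by the `L^p` norm of
the kernel, which is computed exactly, times the `L^q` norm of `f'`, which is controlled by the
trapezoid (Hermite–Hadamard) bound for the convex function `|f'|^q`.
-/

open MeasureTheory intervalIntegral Set

theorem ConvexOn.intervalIntegral_le_trapezoid {g : ℝ → ℝ} {u v : ℝ} (huv : u < v)
    (hg : ConvexOn ℝ (Icc u v) g) (hgi : IntervalIntegrable g volume u v) :
    ∫ x in u..v, g x ≤ (v - u) * ((g u + g v) / 2) := by
  have hvu : v - u ≠ 0 := (sub_pos.2 huv).ne'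
  have hchord : ∀ x ∈ Ioo u v, g x ≤ ((v - x) * g u + (x - u) * g v) / (v - u) := by
    intro x ⟨hux, hxv⟩
    rw [le_div_iff₀ (sub_pos.2 huv), mul_comm]
    exact hg.secant_mono_aux1 (left_mem_Icc.2 huv.le) (right_mem_Icc.2 huv.le) hux hxv
  calc ∫ x in u..v, g x ≤ ∫ x in u..v, ((v - x) * g u + (x - u) * g v) / (v - u) :=
        integral_mono_on_of_le_Ioo huv.le hgi
          (by apply Continuous.intervalIntegrable; fun_prop) hchord
    _ = (v - u) * ((g u + g v) / 2) := by
        rw [intervalIntegral.integral_div, intervalIntegral.integral_add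
            (by apply Continuous.intervalIntegrable; fun_prop)
            (by apply Continuous.intervalIntegrable; fun_prop),
          intervalIntegral.integral_mul_const, intervalIntegral.integral_mul_const,
          integral_comp_sub_left (fun x => x), integral_comp_sub_right (fun x => x),
          integral_id, integral_id]
        field_simp
        ring

theorem ConvexOn.intervalIntegrable {g : ℝ → ℝ} {u v : ℝ} (huv : u ≤ v) (hm : Measurable g)
    (hg : ConvexOn ℝ (Icc u v) g) : IntervalIntegrable g volume u v := by
  set M := max (g u) (g v)
  have hupper : ∀ x ∈ Icc u v, g x ≤ M := fun x hx =>
    hg.le_on_segment (left_mem_Icc.2 huv) (right_mem_Icc.2 huv) (by rwa [segment_eq_Icc huv])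
  -- bounded below since `x` and its reflection `u + v - x` average to the midpoint
  have hlower : ∀ x ∈ Icc u v, 2 * g ((u + v) / 2) - M ≤ g x := by
    intro x hx
    have hx' : u + v - x ∈ Icc u v := ⟨by linarith [hx.2], by linarith [hx.1]⟩
    have hmid := hg.2 hx hx' (by norm_num : (0 : ℝ) ≤ 1 / 2) (by norm_num : (0 : ℝ) ≤ 1 / 2)
      (by norm_num)
    simp only [smul_eq_mul] at hmid
    rw [show 1 / 2 * x + 1 / 2 * (u + v - x) = (u + v) / 2 by ring] at hmid
    linarith [hupper _ hx']
  rw [intervalIntegrable_iff_integrableOn_Icc_of_le huv]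
  refine Measure.integrableOn_of_bounded (M := max M (M - 2 * g ((u + v) / 2)))
    measure_Icc_lt_top.ne hm.aestronglyMeasurable ?_
  refine (ae_restrict_iff' measurableSet_Icc).2 (ae_of_all _ fun x hx => ?_)
  rw [Real.norm_eq_abs, abs_le]
  constructor
  · linarith [hlower x hx, le_max_right M (M - 2 * g ((u + v) / 2))]
  · linarith [hupper x hx, le_max_left M (M - 2 * g ((u + v) / 2))]

theorem integral_abs_sub_rpow {u v c p : ℝ} (huc : u ≤ c) (hcv : c ≤ v) (hp : 0 ≤ p) :
    ∫ x in u..v, |x - c| ^ p = ((c - u) ^ (p + 1) + (v - c) ^ (p + 1)) / (p + 1) := by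
  have hint : ∀ s t : ℝ, IntervalIntegrable (fun x => |x - c| ^ p) volume s t := fun s t =>
    (Continuous.rpow_const (by fun_prop) fun _ => Or.inr hp).intervalIntegrable s t
  have hleft : ∫ x in u..c, |x - c| ^ p = ∫ x in u..c, (c - x) ^ p :=
    integral_congr fun x hx => by
      rw [uIcc_of_le huc] at hx
      rw [abs_sub_comm, abs_of_nonneg (sub_nonneg.2 hx.2)]
  have hright : ∫ x in c..v, |x - c| ^ p = ∫ x in c..v, (x - c) ^ p :=
    integral_congr fun x hx => by
      rw [uIcc_of_le hcv] at hx
      rw [abs_of_nonneg (sub_nonneg.2 hx.1)]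
  have hp1 : p + 1 ≠ 0 := by positivity
  rw [← integral_add_adjacent_intervals (hint u c) (hint c v), hleft, hright,
    integral_comp_sub_left (fun x => x ^ p), integral_comp_sub_right (fun x => x ^ p),
    integral_rpow (Or.inl (by linarith)), integral_rpow (Or.inl (by linarith))]
  simp [Real.zero_rpow hp1]
  ring

theorem abs_intervalIntegral_mul_le_Lp_mul_Lq {g h : ℝ → ℝ} {u v p q : ℝ} (huv : u ≤ v)
    (hpq : p.HolderConjugate q) (hg : AEStronglyMeasurable g (volume.restrict (Ioc u v)))
    (hh : AEStronglyMeasurable h (volume.restrict (Ioc u v)))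
    (hgp : IntervalIntegrable (fun x => |g x| ^ p) volume u v)
    (hhq : IntervalIntegrable (fun x => |h x| ^ q) volume u v) :
    |∫ x in u..v, g x * h x|
      ≤ (∫ x in u..v, |g x| ^ p) ^ (1 / p) * (∫ x in u..v, |h x| ^ q) ^ (1 / q) := by
  rw [intervalIntegrable_iff_integrableOn_Ioc_of_le huv] at hgp hhq
  have hgL : MemLp g (ENNReal.ofReal p) (volume.restrict (Ioc u v)) := by
    rw [← integrable_norm_rpow_iff hg (by simpa using hpq.pos) ENNReal.ofReal_ne_top,
      ENNReal.toReal_ofReal hpq.nonneg]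
    exact hgp
  have hhL : MemLp h (ENNReal.ofReal q) (volume.restrict (Ioc u v)) := by
    rw [← integrable_norm_rpow_iff hh (by simpa using hpq.symm.pos) ENNReal.ofReal_ne_top,
      ENNReal.toReal_ofReal hpq.symm.nonneg]
    exact hhq
  simp only [integral_of_le huv]
  calc |∫ x in Ioc u v, g x * h x| ≤ ∫ x in Ioc u v, |g x| * |h x| := by
        simpa only [Real.norm_eq_abs, abs_mul] using
          norm_integral_le_integral_norm (fun x => g x * h x)
    _ ≤ _ := integral_mul_norm_le_Lp_mul_Lq hpq hgL hhL

theorem integral_sub_mul_deriv {f : ℝ → ℝ} {u v c : ℝ}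
    (hf : ∀ x ∈ uIcc u v, DifferentiableAt ℝ f x) (hf' : IntervalIntegrable (deriv f) volume u v) :
    ∫ x in u..v, (x - c) * deriv f x = (v - c) * f v - (u - c) * f u - ∫ x in u..v, f x := by
  simpa using integral_mul_deriv_eq_deriv_mul (u' := fun _ => 1)
    (fun x _ => (hasDerivAt_id x).sub_const c) (fun x hx => (hf x hx).hasDerivAt)
    intervalIntegrable_const hf'

theorem simpson_sub_average_eq {f : ℝ → ℝ} {a b : ℝ} (hab : a < b)
    (hf : ∀ x ∈ Icc a b, DifferentiableAt ℝ f x) (hf' : IntervalIntegrable (deriv f) volume a b) :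
    (1 / 6) * (f a + 4 * f ((a + b) / 2) + f b) - (1 / (b - a)) * ∫ x in a..b, f x
      = (1 / (b - a)) * ((∫ x in a..(a + b) / 2, (x - (5 * a + b) / 6) * deriv f x)
          + ∫ x in (a + b) / 2..b, (x - (a + 5 * b) / 6) * deriv f x) := by
  have hleft : uIcc a ((a + b) / 2) ⊆ Icc a b := by
    rw [uIcc_of_le (by linarith)]; exact Icc_subset_Icc le_rfl (by linarith)
  have hright : uIcc ((a + b) / 2) b ⊆ Icc a b := by
    rw [uIcc_of_le (by linarith)]; exact Icc_subset_Icc (by linarith) le_rfl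
  have hfc : ContinuousOn f (Icc a b) := fun x hx => (hf x hx).continuousAt.continuousWithinAt
  have hf'ab : uIcc a b = Icc a b := uIcc_of_le hab.le
  rw [integral_sub_mul_deriv (fun x hx => hf x (hleft hx)) (hf'.mono_set (hf'ab ▸ hleft)),
    integral_sub_mul_deriv (fun x hx => hf x (hright hx)) (hf'.mono_set (hf'ab ▸ hright)),
    ← integral_add_adjacent_intervals ((hfc.mono hleft).intervalIntegrable)
      ((hfc.mono hright).intervalIntegrable)]
  field_simp [(sub_pos.2 hab).ne']
  ring

theorem abs_integral_sub_mul_deriv_le {f : ℝ → ℝ} {u v c p q : ℝ} (huv : u < v)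
    (hpq : p.HolderConjugate q) (hconv : ConvexOn ℝ (Icc u v) (fun x => |deriv f x| ^ q)) :
    |∫ x in u..v, (x - c) * deriv f x|
      ≤ (∫ x in u..v, |x - c| ^ p) ^ (1 / p)
        * ((v - u) * ((|deriv f u| ^ q + |deriv f v| ^ q) / 2)) ^ (1 / q) := by
  have hG : IntervalIntegrable (fun x => |deriv f x| ^ q) volume u v :=
    hconv.intervalIntegrable huv.le ((measurable_deriv f).abs.pow_const q)
  refine (abs_intervalIntegral_mul_le_Lp_mul_Lq huv.le hpq (by fun_prop)
    (measurable_deriv f).aestronglyMeasurable.restrict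
    ((Continuous.rpow_const (by fun_prop) fun _ => Or.inr hpq.nonneg).intervalIntegrable u v)
    hG).trans ?_
  have hK : 0 ≤ ∫ x in u..v, |x - c| ^ p := integral_nonneg huv.le fun x _ => by positivity
  have hG0 : 0 ≤ ∫ x in u..v, |deriv f x| ^ q := integral_nonneg huv.le fun x _ => by positivity
  exact mul_le_mul_of_nonneg_left (Real.rpow_le_rpow hG0
    (hconv.intervalIntegral_le_trapezoid huv hG) (one_div_nonneg.2 hpq.symm.nonneg))
    (Real.rpow_nonneg hK _)

theorem integral_abs_sub_rpow_of_trisection {u v c p : ℝ} (huv : u ≤ v)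
    (hc : 3 * c = 2 * u + v ∨ 3 * c = u + 2 * v) (hp : 0 ≤ p) :
    ∫ x in u..v, |x - c| ^ p
      = (v - u) ^ (p + 1) / 3 ^ p * ((1 + 2 ^ (p + 1)) / (3 * (p + 1))) := by
  have hshort : ((v - u) / 3) ^ (p + 1) = (v - u) ^ (p + 1) / (3 ^ p * 3) := by
    rw [Real.div_rpow (by linarith) (by norm_num), Real.rpow_add_one (by norm_num : (3 : ℝ) ≠ 0)]
  have hlong : (2 * (v - u) / 3) ^ (p + 1) = 2 ^ (p + 1) * ((v - u) / 3) ^ (p + 1) := by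
    rw [mul_div_assoc, Real.mul_rpow (by norm_num) (by linarith)]
  have hvalue : (((v - u) / 3) ^ (p + 1) + (2 * (v - u) / 3) ^ (p + 1)) / (p + 1)
      = (v - u) ^ (p + 1) / 3 ^ p * ((1 + 2 ^ (p + 1)) / (3 * (p + 1))) := by
    have hp1 : p + 1 ≠ 0 := by positivity
    rw [hlong, hshort]
    field_simp
  rw [integral_abs_sub_rpow (by rcases hc with hc | hc <;> linarith)
    (by rcases hc with hc | hc <;> linarith) hp]
  rcases hc with hc | hc
  · rw [show c - u = (v - u) / 3 by linarith, show v - c = 2 * (v - u) / 3 by linarith, hvalue]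
  · rw [show c - u = 2 * (v - u) / 3 by linarith, show v - c = (v - u) / 3 by linarith,
      add_comm, hvalue]

theorem abs_integral_sub_trisection_mul_deriv_le {f : ℝ → ℝ} {u v c p q : ℝ} (huv : u < v)
    (hc : 3 * c = 2 * u + v ∨ 3 * c = u + 2 * v) (hpq : p.HolderConjugate q)
    (hconv : ConvexOn ℝ (Icc u v) (fun x => |deriv f x| ^ q)) :
    |∫ x in u..v, (x - c) * deriv f x|
      ≤ (v - u) ^ 2 / 3 * ((1 + 2 ^ (p + 1)) / (3 * (p + 1))) ^ (1 / p)
        * ((|deriv f u| ^ q + |deriv f v| ^ q) / 2) ^ (1 / q) := by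
  set L := v - u
  set K := (1 + 2 ^ (p + 1)) / (3 * (p + 1))
  set A := (|deriv f u| ^ q + |deriv f v| ^ q) / 2
  have hL : 0 < L := sub_pos.2 huv
  have hK : 0 ≤ K := by have := hpq.nonneg; positivity
  have hA : 0 ≤ A := by positivity
  have hexp : (p + 1) * (1 / p) + 1 / q = 2 := by
    have := hpq.inv_add_inv_eq_one
    have := hpq.ne_zero
    field_simp at *
    linarith
  calc |∫ x in u..v, (x - c) * deriv f x|
      ≤ (L ^ (p + 1) / 3 ^ p * K) ^ (1 / p) * (L * A) ^ (1 / q) := by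
        rw [← integral_abs_sub_rpow_of_trisection huv.le hc hpq.nonneg]
        exact abs_integral_sub_mul_deriv_le huv hpq hconv
    _ = L ^ ((p + 1) * (1 / p)) * L ^ (1 / q) / (3 ^ p) ^ (1 / p) * K ^ (1 / p) * A ^ (1 / q) := by
        rw [Real.mul_rpow (by positivity) hK, Real.div_rpow (by positivity) (by positivity),
          Real.mul_rpow hL.le hA, ← Real.rpow_mul hL.le]
        ring
    _ = L ^ 2 / 3 * K ^ (1 / p) * A ^ (1 / q) := by
        rw [← Real.rpow_add hL, hexp, Real.rpow_two, one_div,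
          Real.rpow_rpow_inv (by norm_num) hpq.ne_zero]

theorem stmt15 (f : ℝ → ℝ) (a b p q : ℝ) (hab : a < b) (hq : 1 < q)
    (hp : p = q / (q - 1))
    (hf : ∀ x ∈ Set.Icc a b, DifferentiableAt ℝ f x)
    (hint : IntervalIntegrable (deriv f) volume a b)
    (hconv : ConvexOn ℝ (Set.Icc a b) (fun x => |deriv f x| ^ q)) :
    |(1/6) * (f a + 4 * f ((a + b) / 2) + f b) - (1 / (b - a)) * ∫ x in a..b, f x|
      ≤ ((b - a) / 12) * ((1 + 2 ^ (p + 1)) / (3 * (p + 1))) ^ (1 / p) *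
        (((|deriv f ((a + b) / 2)| ^ q + |deriv f a| ^ q) / 2) ^ (1 / q)
          + ((|deriv f ((a + b) / 2)| ^ q + |deriv f b| ^ q) / 2) ^ (1 / q)) := by
  have hpq : p.HolderConjugate q := ((Real.holderConjugate_iff_eq_conjExponent hq).2 hp).symm
  have hleft := abs_integral_sub_trisection_mul_deriv_le (f := f) (c := (5 * a + b) / 6)
    (by linarith : a < (a + b) / 2) (Or.inl (by ring)) hpq
    (hconv.subset (Icc_subset_Icc le_rfl (by linarith)) (convex_Icc _ _))
  have hright := abs_integral_sub_trisection_mul_deriv_le (f := f) (c := (a + 5 * b) / 6)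
    (by linarith : (a + b) / 2 < b) (Or.inr (by ring)) hpq
    (hconv.subset (Icc_subset_Icc (by linarith) le_rfl) (convex_Icc _ _))
  have hba : 0 < b - a := sub_pos.2 hab
  rw [add_comm (|deriv f a| ^ q)] at hleft
  rw [simpson_sub_average_eq hab hf hint, abs_mul, abs_of_pos (one_div_pos.2 hba)]
  refine (mul_le_mul_of_nonneg_left ((abs_add_le _ _).trans (add_le_add hleft hright))
    (one_div_pos.2 hba).le).trans_eq ?_
  field_simp
  ring
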